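/- arXiv:2308.06765 — 8 statements merged into one kernel-verified Lean document; each statement's English description precedes it below -/
import Mathlib

section
/- Let R be a nontrivial associative ring with unity. Then the following are equivalent: (i) every nonzero two-sided ideal of R contains a left insulator; (ii) every nonzero left ideal of R contains a left insulator. -/
/-- A finite subset `F` of a ring `R` is a *left insulator* if its left annihilator is zero. -/
def IsLeftInsulator {R : Type*} [Ring R] (F : Finset R) : Prop :=
  ∀ r : R, (∀ a ∈ F, r * a = 0) → r = 0

/-- For a nontrivial ring `R`, every nonzero two-sided ideal contains a left insulator iff
every nonzero left ideal contains a left insulator. -/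
theorem stmt0 {R : Type*} [Ring R] [Nontrivial R] :
    (∀ I : TwoSidedIdeal R, I ≠ ⊥ →
      ∃ F : Finset R, (↑F : Set R) ⊆ (I : Set R) ∧ IsLeftInsulator F) ↔
    (∀ J : Ideal R, J ≠ ⊥ →
      ∃ F : Finset R, (↑F : Set R) ⊆ (J : Set R) ∧ IsLeftInsulator F) := by
  classical
  constructor
  · intro h J hJ
    -- `T` : the two-sided ideal generated by `J`, as an additive closure of `{j*r}`.
    set S : Set R := {x | ∃ j ∈ J, ∃ r : R, x = j * r} with hS
    have hSmul : ∀ {x y : R}, y ∈ S → x * y ∈ S := by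
      rintro x y ⟨j, hj, r, rfl⟩
      exact ⟨x * j, J.mul_mem_left x hj, r, (mul_assoc x j r).symm⟩
    have hSmulr : ∀ {x y : R}, x ∈ S → x * y ∈ S := by
      rintro x y ⟨j, hj, r, rfl⟩
      exact ⟨j, hj, r * y, mul_assoc j r y⟩
    set A : AddSubgroup R := AddSubgroup.closure S with hA
    have hAmul : ∀ {x y : R}, y ∈ A → x * y ∈ A := by
      intro x y hy
      induction hy using AddSubgroup.closure_induction with
      | mem z hz => exact AddSubgroup.subset_closure (hSmul hz)
      | zero => simpa using A.zero_mem
      | add a b _ _ ha hb => simpa [mul_add] using A.add_mem ha hb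
      | neg a _ ha => simpa [mul_neg] using A.neg_mem ha
    have hAmulr : ∀ {x y : R}, x ∈ A → x * y ∈ A := by
      intro x y hx
      induction hx using AddSubgroup.closure_induction with
      | mem z hz => exact AddSubgroup.subset_closure (hSmulr hz)
      | zero => simpa using A.zero_mem
      | add a b _ _ ha hb => simpa [add_mul] using A.add_mem ha hb
      | neg a _ ha => simpa [neg_mul] using A.neg_mem ha
    set T : TwoSidedIdeal R := TwoSidedIdeal.mk' (A : Set R) A.zero_mem
      (fun hx hy => A.add_mem hx hy) (fun hx => A.neg_mem hx)
      (fun hy => hAmul hy) (fun hx => hAmulr hx) with hT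
    have memT : ∀ x : R, x ∈ T ↔ x ∈ A := by
      intro x; simp [hT]
    -- T ≠ ⊥
    obtain ⟨a, haJ, ha0⟩ : ∃ a ∈ J, a ≠ 0 := by
      by_contra hc
      push_neg at hc
      exact hJ (le_antisymm (fun x hx => by simpa using hc x hx) bot_le)
    have haT : a ∈ T := (memT a).2 (AddSubgroup.subset_closure ⟨a, haJ, 1, by simp⟩)
    have hT0 : T ≠ ⊥ := by
      intro hbot
      rw [hbot] at haT
      exact ha0 (by simpa using haT)
    obtain ⟨F, hFT, hFins⟩ := h T hT0
    -- every element of T is "covered" by a finite subset of J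
    have key : ∀ x ∈ A, ∃ G : Finset R, (↑G : Set R) ⊆ (J : Set R) ∧
        ∀ r : R, (∀ b ∈ G, r * b = 0) → r * x = 0 := by
      intro x hx
      induction hx using AddSubgroup.closure_induction with
      | mem z hz =>
        obtain ⟨j, hj, s, rfl⟩ := hz
        exact ⟨{j}, by simpa using hj, fun r hr => by
          rw [← mul_assoc, hr j (Finset.mem_singleton_self j), zero_mul]⟩
      | zero => exact ⟨∅, by simp, fun r _ => by simp⟩
      | add b c _ _ hb hc =>
        obtain ⟨G₁, hG₁, h₁⟩ := hb
        obtain ⟨G₂, hG₂, h₂⟩ := hc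
        refine ⟨G₁ ∪ G₂, ?_, fun r hr => ?_⟩
        · simpa using Set.union_subset hG₁ hG₂
        · have e₁ := h₁ r fun b hb => hr b (Finset.mem_union_left _ hb)
          have e₂ := h₂ r fun b hb => hr b (Finset.mem_union_right _ hb)
          simp [mul_add, e₁, e₂]
      | neg b _ hb =>
        obtain ⟨G, hG, h₁⟩ := hb
        exact ⟨G, hG, fun r hr => by simp [mul_neg, h₁ r hr]⟩
    choose! G hGJ hGann using key
    refine ⟨F.biUnion (fun f => G f), ?_, ?_⟩
    · intro x hx
      simp only [Finset.coe_biUnion, Set.mem_iUnion, Finset.mem_coe] at hx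
      obtain ⟨f, hf, hx⟩ := hx
      exact hGJ f ((memT f).1 (hFT hf)) hx
    · intro r hr
      refine hFins r fun f hf => ?_
      exact hGann f ((memT f).1 (hFT hf)) r fun b hb =>
        hr b (Finset.mem_biUnion.2 ⟨f, hf, hb⟩)
  · intro h I hI
    obtain ⟨a, haI, ha0⟩ : ∃ a ∈ I, a ≠ 0 := by
      by_contra hc
      push_neg at hc
      refine hI (le_antisymm (fun x hx => ?_) bot_le)
      simpa using hc x hx
    have : TwoSidedIdeal.asIdeal I ≠ ⊥ := by
      intro hbot
      have : a ∈ TwoSidedIdeal.asIdeal I := TwoSidedIdeal.mem_asIdeal.2 haI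
      rw [hbot] at this
      exact ha0 (by simpa using this)
    obtain ⟨F, hF, hFins⟩ := h (TwoSidedIdeal.asIdeal I) this
    exact ⟨F, by simpa [TwoSidedIdeal.coe_asIdeal] using hF, hFins⟩
end

section
/- Let R be a nontrivial associative ring with unity. Then the following are equivalent: (i) every nonzero two-sided ideal of R contains a right insulator; (ii) every nonzero right ideal of R contains a right insulator. -/
/-- A finite subset `F` of a ring `R` is a *right insulator* if its right annihilator is zero. -/
def IsRightInsulator {R : Type*} [Ring R] (F : Finset R) : Prop :=
  ∀ r : R, (∀ a ∈ F, a * r = 0) → r = 0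

open Pointwise in
lemma insulator_aux {R : Type*} [Ring R] {a z : R}
    (hz : z ∈ TwoSidedIdeal.span {a}) :
    ∃ T : Finset R, (∀ t ∈ T, ∃ u : R, t = a * u) ∧
      ∀ x : R, (∀ t ∈ T, t * x = 0) → z * x = 0 := by
  classical
  rw [TwoSidedIdeal.mem_span_iff_mem_addSubgroup_closure] at hz
  induction hz using AddSubgroup.closure_induction with
  | mem w hw =>
    obtain ⟨p, ⟨r, -, s, hs, rfl⟩, u, -, rfl⟩ := hw
    rw [Set.mem_singleton_iff] at hs
    rw [hs]
    refine ⟨{a * u}, fun t ht => ⟨u, by simpa using ht⟩, fun x hx => ?_⟩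
    have := hx (a * u) (Finset.mem_singleton_self _)
    show r * a * u * x = 0
    rw [mul_assoc r a u, mul_assoc r (a * u) x, this, mul_zero]
  | zero => exact ⟨∅, by simp, fun x _ => by simp⟩
  | add z w _ _ hz hw =>
    obtain ⟨T₁, h₁, h₁'⟩ := hz
    obtain ⟨T₂, h₂, h₂'⟩ := hw
    refine ⟨T₁ ∪ T₂, fun t ht => ?_, fun x hx => ?_⟩
    · rcases Finset.mem_union.mp ht with h | h
      · exact h₁ t h
      · exact h₂ t h
    · have e1 := h₁' x fun t ht => hx t (Finset.mem_union_left _ ht)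
      have e2 := h₂' x fun t ht => hx t (Finset.mem_union_right _ ht)
      show (z + w) * x = 0
      rw [add_mul, e1, e2, add_zero]
  | neg z _ hz =>
    obtain ⟨T, h, h'⟩ := hz
    exact ⟨T, h, fun x hx => by
      show (-z) * x = 0
      rw [neg_mul, h' x hx, neg_zero]⟩

/-- For a nontrivial ring `R`, every nonzero two-sided ideal contains a right insulator iff
every nonzero right ideal (a submodule of `R` over `Rᵐᵒᵖ`) contains a right insulator. -/
theorem stmt2 {R : Type*} [Ring R] [Nontrivial R] :
    (∀ I : TwoSidedIdeal R, I ≠ ⊥ →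
      ∃ F : Finset R, (↑F : Set R) ⊆ (I : Set R) ∧ IsRightInsulator F) ↔
    (∀ J : Submodule Rᵐᵒᵖ R, J ≠ ⊥ →
      ∃ F : Finset R, (↑F : Set R) ⊆ (J : Set R) ∧ IsRightInsulator F) := by
  classical
  constructor
  · intro h J hJ
    obtain ⟨a, haJ, ha0⟩ := (Submodule.ne_bot_iff J).mp hJ
    have hspan : TwoSidedIdeal.span {a} ≠ ⊥ := by
      intro hbot
      have : a ∈ TwoSidedIdeal.span ({a} : Set R) :=
        TwoSidedIdeal.subset_span rfl
      rw [hbot, TwoSidedIdeal.mem_bot] at this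
      exact ha0 this
    obtain ⟨F, hFsub, hFins⟩ := h _ hspan
    -- for each f ∈ F, extract a finset
    have key : ∀ f ∈ F, ∃ T : Finset R, (∀ t ∈ T, ∃ u : R, t = a * u) ∧
        ∀ x : R, (∀ t ∈ T, t * x = 0) → f * x = 0 :=
      fun f hf => insulator_aux (hFsub hf)
    choose T hT hT' using key
    refine ⟨F.attach.biUnion (fun f => T f.1 f.2), ?_, ?_⟩
    · intro t ht
      simp only [Finset.coe_biUnion, Set.mem_iUnion, Finset.mem_coe] at ht
      obtain ⟨⟨f, hf⟩, -, htf⟩ := ht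
      obtain ⟨u, rfl⟩ := hT f hf t htf
      show a * u ∈ J
      have : (MulOpposite.op u) • a ∈ J := J.smul_mem _ haJ
      simpa [op_smul_eq_mul] using this
    · intro x hx
      refine hFins x fun f hf => hT' f hf x fun t ht => ?_
      exact hx t (Finset.mem_biUnion.mpr ⟨⟨f, hf⟩, Finset.mem_attach _ _, ht⟩)
  · intro h I hI
    let J : Submodule Rᵐᵒᵖ R :=
      { carrier := I
        add_mem' := fun ha hb => I.add_mem ha hb
        zero_mem' := I.zero_mem
        smul_mem' := fun r x hx => I.mul_mem_right x r.unop hx }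
    have hJ : J ≠ ⊥ := by
      intro hbot
      apply hI
      refine SetLike.ext fun x => ?_
      rw [TwoSidedIdeal.mem_bot]
      constructor
      · intro hx
        have : x ∈ J := hx
        rw [hbot, Submodule.mem_bot] at this
        exact this
      · rintro rfl; exact I.zero_mem
    obtain ⟨F, hFsub, hFins⟩ := h J hJ
    exact ⟨F, hFsub, hFins⟩
end

section
/- Let R be a nontrivial associative ring with unity and let α be a ring automorphism of R. Then R is left α-strongly prime if and only if every nonzero left α-ideal I of R contains a finite subset F whose left annihilator is zero (i.e., the condition with all powers α^k, k ≥ 0, can be replaced by the condition with k = 0 only). -/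
/-- A ring `R` is *left `α`-strongly prime* if every nonzero left `α`-ideal `I` of `R`
(i.e. left ideal with `α I ⊆ I`) contains a finite subset `F` such that `α^k(F)` has zero
left annihilator for every `k ≥ 0`. -/
def IsLeftAlphaStronglyPrime {R : Type*} [Ring R] (α : R →+* R) : Prop :=
  ∀ I : Ideal R, I ≠ ⊥ → (∀ x ∈ I, α x ∈ I) →
    ∃ F : Finset R, (↑F : Set R) ⊆ (I : Set R) ∧
      ∀ k : ℕ, ∀ r : R, (∀ a ∈ F, r * (⇑α)^[k] a = 0) → r = 0

private lemma symm_iter_mul {R : Type*} [Ring R] (α : R ≃+* R) (k : ℕ) (x y : R) :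
    (⇑α.symm)^[k] (x * y) = (⇑α.symm)^[k] x * (⇑α.symm)^[k] y := by
  induction k generalizing x y with
  | zero => simp
  | succ n ih => simp [Function.iterate_succ_apply, map_mul, ih]

private lemma iter_inv {R : Type*} [Ring R] (α : R ≃+* R) (k : ℕ) (x : R) :
    (⇑α)^[k] ((⇑α.symm)^[k] x) = x := by
  induction k generalizing x with
  | zero => rfl
  | succ n ih => rw [Function.iterate_succ_apply, Function.iterate_succ_apply',
      RingEquiv.apply_symm_apply, ih]

private lemma symm_iter_inv {R : Type*} [Ring R] (α : R ≃+* R) (k : ℕ) (x : R) :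
    (⇑α.symm)^[k] ((⇑α)^[k] x) = x := by
  induction k generalizing x with
  | zero => rfl
  | succ n ih => rw [Function.iterate_succ_apply, Function.iterate_succ_apply',
      RingEquiv.symm_apply_apply, ih]

/-- For an automorphism `α`, `R` is left `α`-strongly prime iff every nonzero left `α`-ideal
contains a finite subset with zero left annihilator (i.e. `k = 0` suffices). -/
theorem stmt5 {R : Type*} [Ring R] [Nontrivial R] (α : R ≃+* R) :
    IsLeftAlphaStronglyPrime (α : R →+* R) ↔
    (∀ I : Ideal R, I ≠ ⊥ → (∀ x ∈ I, α x ∈ I) →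
      ∃ F : Finset R, (↑F : Set R) ⊆ (I : Set R) ∧
        ∀ r : R, (∀ a ∈ F, r * a = 0) → r = 0) := by
  constructor
  · intro h I hI hα
    obtain ⟨F, hF, hann⟩ := h I hI hα
    exact ⟨F, hF, fun r hr => hann 0 r (by simpa using hr)⟩
  · intro h I hI hα
    obtain ⟨F, hF, hann⟩ := h I hI hα
    refine ⟨F, hF, fun k r hr => ?_⟩
    simp only [RingEquiv.coe_toRingHom] at hr
    have : (⇑α.symm)^[k] r = 0 := by
      apply hann
      intro a ha
      have := congrArg (⇑α.symm)^[k] (hr a ha)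
      rwa [symm_iter_mul, symm_iter_inv, Function.iterate_fixed (map_zero _)] at this
    have := congrArg (⇑α)^[k] this
    rwa [iter_inv, Function.iterate_fixed (map_zero _)] at this
end

section
/- Let R be a nontrivial associative ring with unity and let α be a ring endomorphism of R. If R is left α-strongly prime, then α is injective. -/
/-- If `R` is left `α`-strongly prime then `α` is injective. -/
theorem stmt6 {R : Type*} [Ring R] [Nontrivial R] (α : R →+* R)
    (h : IsLeftAlphaStronglyPrime α) : Function.Injective α := by
  rw [injective_iff_map_eq_zero]
  intro x hx
  by_contra hxne
  have hker : (RingHom.ker α : Ideal R) ≠ ⊥ := by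
    intro hb
    exact hxne (by simpa [hb] using RingHom.mem_ker.mpr hx)
  obtain ⟨F, hFsub, hF⟩ := h (RingHom.ker α) hker (by
    intro y hy
    rw [RingHom.mem_ker] at hy ⊢
    rw [hy, map_zero])
  have : (1 : R) = 0 := hF 1 1 (by
    intro a ha
    have : α a = 0 := RingHom.mem_ker.mp (hFsub ha)
    simp [this])
  exact one_ne_zero this
end

section
/- Let K be a field and let R be the quotient of the free noncommutative K-algebra on generators x_0, x_1, x_2, … by the two-sided ideal generated by all products x_k·x_ℓ with k ≥ ℓ. Then for every finite subset F of the two-sided ideal of R generated by the images of the generators x_i, there exists an index N such that the image of x_N in R is nonzero and satisfies x̄_N · a = 0 for every a ∈ F; in particular, the left annihilator of F in R is nonzero. -/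
/-- The defining relations `x_k * x_ℓ = 0` for `k ≥ ℓ` on the free algebra on `ℕ`. -/
inductive MonomialRel (K : Type*) [Field K] : FreeAlgebra K ℕ → FreeAlgebra K ℕ → Prop
  | rel (k ℓ : ℕ) (h : ℓ ≤ k) : MonomialRel K (FreeAlgebra.ι K k * FreeAlgebra.ι K ℓ) 0

/-- The image `x̄_i` of the generator `x_i` in the quotient ring `R`. -/
noncomputable def Xgen (K : Type*) [Field K] (i : ℕ) : RingQuot (MonomialRel K) :=
  RingQuot.mkAlgHom K (MonomialRel K) (FreeAlgebra.ι K i)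

section Aux

variable (K : Type*) [Field K]

lemma Xgen_mul_Xgen (n j : ℕ) (h : j ≤ n) : Xgen K n * Xgen K j = 0 := by
  unfold Xgen
  rw [← map_mul, RingQuot.mkAlgHom_rel K (MonomialRel.rel n j h), map_zero]

/-- The K-submodule spanned by elements `x̄_j * z` with `j ≤ i`. -/
noncomputable def Msub (i : ℕ) : Submodule K (RingQuot (MonomialRel K)) :=
  Submodule.span K {u | ∃ j ≤ i, ∃ z, u = Xgen K j * z}

lemma Msub_mono {i i' : ℕ} (h : i ≤ i') : Msub K i ≤ Msub K i' :=
  Submodule.span_mono (by rintro u ⟨j, hj, z, rfl⟩; exact ⟨j, hj.trans h, z, rfl⟩)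

lemma Msub_mul_right {i : ℕ} {u : RingQuot (MonomialRel K)} (hu : u ∈ Msub K i)
    (w : RingQuot (MonomialRel K)) : u * w ∈ Msub K i := by
  induction hu using Submodule.span_induction with
  | mem u hu =>
    obtain ⟨j, hj, z, rfl⟩ := hu
    exact Submodule.subset_span ⟨j, hj, z * w, (mul_assoc _ _ _)⟩
  | zero => simpa using (Msub K i).zero_mem
  | add a b _ _ ha hb => rw [add_mul]; exact (Msub K i).add_mem ha hb
  | smul c a _ ha => rw [smul_mul_assoc]; exact (Msub K i).smul_mem c ha

lemma Msub_ann {i n : ℕ} (hn : i ≤ n) {u : RingQuot (MonomialRel K)} (hu : u ∈ Msub K i) :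
    Xgen K n * u = 0 := by
  induction hu using Submodule.span_induction with
  | mem u hu =>
    obtain ⟨j, hj, z, rfl⟩ := hu
    rw [← mul_assoc, Xgen_mul_Xgen K n j (hj.trans hn), zero_mul]
  | zero => simp
  | add a b _ _ ha hb => rw [mul_add, ha, hb, add_zero]
  | smul c a _ ha => rw [mul_smul_comm, ha, smul_zero]

lemma Msub_key (y : FreeAlgebra K ℕ) (i : ℕ) :
    RingQuot.mkAlgHom K (MonomialRel K) y * Xgen K i ∈ Msub K i := by
  induction y using FreeAlgebra.induction generalizing i with
  | grade0 c =>
    rw [AlgHom.commutes, ← Algebra.smul_def]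
    exact (Msub K i).smul_mem c (Submodule.subset_span ⟨i, le_rfl, 1, (mul_one _).symm⟩)
  | grade1 j =>
    rcases le_or_gt j i with hj | hj
    · exact Submodule.subset_span ⟨j, hj, Xgen K i, rfl⟩
    · rw [show RingQuot.mkAlgHom K (MonomialRel K) (FreeAlgebra.ι K j) = Xgen K j from rfl,
        Xgen_mul_Xgen K j i hj.le]
      exact (Msub K i).zero_mem
  | mul y z hy hz =>
    rw [map_mul, mul_assoc]
    have H : ∀ u ∈ Msub K i, RingQuot.mkAlgHom K (MonomialRel K) y * u ∈ Msub K i := by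
      intro u hu
      induction hu using Submodule.span_induction with
      | mem u hu =>
        obtain ⟨j, hj, w, rfl⟩ := hu
        rw [← mul_assoc]
        exact Msub_mono K hj (Msub_mul_right K (hy j) w)
      | zero => simpa using (Msub K i).zero_mem
      | add a b _ _ ha hb => rw [mul_add]; exact (Msub K i).add_mem ha hb
      | smul c a _ ha => rw [mul_smul_comm]; exact (Msub K i).smul_mem c ha
    exact H _ (hz i)
  | add y z hy hz =>
    rw [map_add, add_mul]
    exact (Msub K i).add_mem (hy i) (hz i)

lemma Msub_mul_left {i : ℕ} (r : RingQuot (MonomialRel K)) {u : RingQuot (MonomialRel K)}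
    (hu : u ∈ Msub K i) : r * u ∈ Msub K i := by
  obtain ⟨y, rfl⟩ := RingQuot.mkAlgHom_surjective K (MonomialRel K) r
  induction hu using Submodule.span_induction with
  | mem u hu =>
    obtain ⟨j, hj, w, rfl⟩ := hu
    rw [← mul_assoc]
    exact Msub_mono K hj (Msub_mul_right K (Msub_key K y j) w)
  | zero => simpa using (Msub K i).zero_mem
  | add a b _ _ ha hb => rw [mul_add]; exact (Msub K i).add_mem ha hb
  | smul c a _ ha => rw [mul_smul_comm]; exact (Msub K i).smul_mem c ha

/-- Every element of the span lies in some `Msub K N`. -/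
lemma span_sub : (TwoSidedIdeal.span (Set.range (Xgen K)) : Set (RingQuot (MonomialRel K))) ⊆
    {a | ∃ N, a ∈ Msub K N} := by
  intro a ha
  rw [SetLike.mem_coe, TwoSidedIdeal.mem_span_iff] at ha
  have := ha (TwoSidedIdeal.mk' {a | ∃ N, a ∈ Msub K N}
    ⟨0, (Msub K 0).zero_mem⟩
    (fun {x y} ⟨N1, h1⟩ ⟨N2, h2⟩ => ⟨max N1 N2,
      (Msub K (max N1 N2)).add_mem (Msub_mono K (le_max_left _ _) h1)
        (Msub_mono K (le_max_right _ _) h2)⟩)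
    (fun {x} ⟨N, h⟩ => ⟨N, (Msub K N).neg_mem h⟩)
    (fun {x y} ⟨N, h⟩ => ⟨N, Msub_mul_left K x h⟩)
    (fun {x y} ⟨N, h⟩ => ⟨N, Msub_mul_right K h y⟩))
    (by rintro _ ⟨i, rfl⟩
        rw [SetLike.mem_coe, TwoSidedIdeal.mem_mk']
        exact ⟨i, Submodule.subset_span ⟨i, le_rfl, 1, (mul_one _).symm⟩⟩)
  rwa [TwoSidedIdeal.mem_mk'] at this

/-- A model showing the generators are nonzero. -/
lemma Xgen_ne_zero (N : ℕ) : Xgen K N ≠ 0 := by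
  let φ : FreeAlgebra K ℕ →ₐ[K] TrivSqZeroExt K (ℕ →₀ K) :=
    FreeAlgebra.lift K fun i => TrivSqZeroExt.inr (Finsupp.single i (1 : K))
  have hrel : ∀ ⦃x y⦄, MonomialRel K x y → φ x = φ y := by
    rintro _ _ ⟨k, l, h⟩
    simp [φ, TrivSqZeroExt.inr_mul_inr]
  let ψ := RingQuot.liftAlgHom K (s := MonomialRel K) ⟨φ, hrel⟩
  intro h0
  have : ψ (Xgen K N) = 0 := by rw [h0, map_zero]
  rw [show Xgen K N = RingQuot.mkAlgHom K (MonomialRel K) (FreeAlgebra.ι K N) from rfl,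
    RingQuot.liftAlgHom_mkAlgHom_apply] at this
  simp only [φ, FreeAlgebra.lift_ι_apply] at this
  exact one_ne_zero (α := K) (by
    have := TrivSqZeroExt.inr_injective (M := ℕ →₀ K) (this.trans (TrivSqZeroExt.inr_zero K).symm)
    simpa using Finsupp.single_eq_zero.mp this)

end Aux

/-- For every finite subset `F` of the two-sided ideal of `R` generated by the images of the
generators, some generator `x̄_N` is nonzero and left-annihilates `F`; in particular the
left annihilator of `F` is nonzero. -/
theorem stmt7 (K : Type*) [Field K] (F : Finset (RingQuot (MonomialRel K)))
    (hF : (↑F : Set (RingQuot (MonomialRel K))) ⊆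
      (TwoSidedIdeal.span (Set.range (Xgen K)) : Set (RingQuot (MonomialRel K)))) :
    (∃ N : ℕ, Xgen K N ≠ 0 ∧ ∀ a ∈ F, Xgen K N * a = 0) ∧
    (∃ r : RingQuot (MonomialRel K), r ≠ 0 ∧ ∀ a ∈ F, r * a = 0) := by
  have hN : ∃ N : ℕ, ∀ a ∈ F, a ∈ Msub K N := by
    classical
    induction F using Finset.induction with
    | empty => exact ⟨0, by simp⟩
    | @insert a s hx ih =>
      obtain ⟨N1, hN1⟩ := span_sub K (hF (Finset.mem_coe.mpr (Finset.mem_insert_self a s)))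
      obtain ⟨N2, hN2⟩ := ih (fun b hb => hF (by simp only [Finset.coe_insert]; exact Set.mem_insert_of_mem _ hb))
      exact ⟨max N1 N2, fun b hb => by
        rcases Finset.mem_insert.mp hb with rfl | hb
        · exact Msub_mono K (le_max_left _ _) hN1
        · exact Msub_mono K (le_max_right _ _) (hN2 b hb)⟩
  obtain ⟨N, hN⟩ := hN
  have main : Xgen K N ≠ 0 ∧ ∀ a ∈ F, Xgen K N * a = 0 :=
    ⟨Xgen_ne_zero K N, fun a ha => Msub_ann K le_rfl (hN a ha)⟩
  exact ⟨⟨N, main⟩, ⟨Xgen K N, main⟩⟩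
end

section
/- Let K be a field, let R be the quotient of the free noncommutative K-algebra on generators x_0, x_1, x_2, … by the two-sided ideal generated by all products x_k·x_ℓ with k ≥ ℓ, and let α be the K-algebra endomorphism of R induced by x_k ↦ x_{k+1}. Then for every nonzero a ∈ R there exists n ≥ 0 such that the right annihilator of a meets α^n(R) trivially: for every r ∈ R, if a·α^n(r) = 0 then α^n(r) = 0. -/
namespace Stmt9
variable (K : Type*) [Field K]

abbrev W : Type := {l : List ℕ // l.IsChain (· < ·)}
abbrev V := W →₀ K
abbrev R := RingQuot (MonomialRel K)

noncomputable def Tk (k : ℕ) : V K →ₗ[K] V K :=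
  Finsupp.lift (V K) K W
    (fun w => if h : (k :: w.1).IsChain (· < ·) then Finsupp.single (⟨k :: w.1, h⟩ : W) (1:K) else 0)

lemma Tk_single (k : ℕ) (w : W) (c : K) :
    Tk K k (Finsupp.single w c)
      = if h : (k :: w.1).IsChain (· < ·) then Finsupp.single (⟨k :: w.1, h⟩ : W) c else 0 := by
  simp only [Tk, Finsupp.lift_apply, Finsupp.sum_single_index, zero_smul]
  split_ifs <;> simp [Finsupp.smul_single]

lemma Tk_Tk (k ℓ : ℕ) (h : ℓ ≤ k) : (Tk K k) ∘ₗ (Tk K ℓ) = 0 := by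
  apply Finsupp.lhom_ext
  intro w c
  simp only [LinearMap.comp_apply, Tk_single, LinearMap.zero_apply]
  split_ifs with h1
  · rw [Tk_single]
    have : ¬ (k :: ℓ :: w.1).IsChain (· < ·) := by
      simp [List.isChain_cons_cons]; omega
    simp [this]
  · simp

noncomputable def F : FreeAlgebra K ℕ →ₐ[K] Module.End K (V K) :=
  FreeAlgebra.lift K (Tk K)

lemma F_rel : ∀ ⦃x y : FreeAlgebra K ℕ⦄, MonomialRel K x y → F K x = F K y := by
  rintro x y ⟨k, ℓ, h⟩
  simp only [map_mul, map_zero, F, FreeAlgebra.lift_ι_apply]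
  exact Tk_Tk K k ℓ h

noncomputable def Φ : R K →ₐ[K] Module.End K (V K) :=
  RingQuot.liftAlgHom K ⟨F K, F_rel K⟩

lemma Φ_Xgen (k : ℕ) : Φ K (Xgen K k) = Tk K k := by
  simp [Φ, Xgen, RingQuot.liftAlgHom_mkAlgHom_apply, F, FreeAlgebra.lift_ι_apply]

/-- product of generators along a list -/
noncomputable def wprod (l : List ℕ) : R K := (l.map (Xgen K)).prod

lemma Xgen_mul_Xgen (k ℓ : ℕ) (h : ℓ ≤ k) : Xgen K k * Xgen K ℓ = 0 := by
  have := RingQuot.mkAlgHom_rel K (MonomialRel.rel (K := K) k ℓ h)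
  simpa [Xgen, map_mul] using this

lemma Phi_wprod_single (l : List ℕ) (v : W) :
    Φ K (wprod K l) (Finsupp.single v (1:K))
      = if h : (l ++ v.1).IsChain (· < ·) then Finsupp.single (⟨l ++ v.1, h⟩ : W) (1:K) else 0 := by
  induction l with
  | nil => simp [wprod, v.2]
  | cons k t ih =>
      have : wprod K (k :: t) = Xgen K k * wprod K t := by simp [wprod]
      rw [this, map_mul]
      change (Φ K (Xgen K k)) ((Φ K (wprod K t)) _) = _
      rw [ih, Φ_Xgen]
      simp only [List.cons_append]
      by_cases h1 : (t ++ v.1).IsChain (· < ·)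
      · rw [dif_pos h1, Tk_single]
      · rw [dif_neg h1, map_zero, dif_neg (fun h2 => h1 (List.IsChain.tail (l := k :: (t ++ v.1)) h2))]

lemma wprod_eq_zero (l : List ℕ) (h : ¬ l.IsChain (· < ·)) : wprod K l = 0 := by
  induction l with
  | nil => exact absurd List.isChain_nil h
  | cons k t ih =>
      match t, ih with
      | [], _ => exact absurd (List.isChain_singleton k) h
      | b :: t', ih =>
        rw [List.isChain_cons_cons] at h
        push_neg at h
        by_cases hkb : k < b
        · have := ih (h hkb)
          simp only [wprod, List.map_cons, List.prod_cons] at *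
          rw [this, mul_zero]
        · simp only [wprod, List.map_cons, List.prod_cons, ← mul_assoc]
          rw [Xgen_mul_Xgen K k b (by omega), zero_mul]

noncomputable def ψ : V K →ₗ[K] R K :=
  Finsupp.lift (R K) K (W) (fun w => wprod K w.1)

lemma ψ_single (w : W) (c : K) : ψ K (Finsupp.single w c) = c • wprod K w.1 := by
  simp [ψ, Finsupp.lift_apply, Finsupp.sum_single_index]

noncomputable def e0 : V K := Finsupp.single (⟨[], List.isChain_nil⟩ : W) 1

lemma e0_def : e0 K = Finsupp.single (⟨[], List.isChain_nil⟩ : W) 1 := rfl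

noncomputable def θ : R K →ₗ[K] V K :=
  (LinearMap.applyₗ (e0 K)).comp (Φ K).toLinearMap

lemma θ_apply (x : R K) : θ K x = Φ K x (e0 K) := rfl

lemma θ_ψ (v : V K) : θ K (ψ K v) = v := by
  induction v using Finsupp.induction_linear with
  | zero => simp
  | add f g hf hg => rw [map_add, map_add, hf, hg]
  | single w c =>
      rw [ψ_single, map_smul, θ_apply]
      have := Phi_wprod_single K w.1 (⟨[], List.isChain_nil⟩ : W)
      simp only [List.append_nil] at this
      rw [e0_def, this, dif_pos w.2]
      simp [Finsupp.smul_single]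

lemma wprod_mem_range (l : List ℕ) : wprod K l ∈ LinearMap.range (ψ K) := by
  by_cases h : l.IsChain (· < ·)
  · exact ⟨Finsupp.single (⟨l, h⟩ : W) 1, by simp [ψ_single]⟩
  · rw [wprod_eq_zero K l h]; exact zero_mem _

lemma mul_mem_range (x y : R K) (hx : x ∈ LinearMap.range (ψ K)) (hy : y ∈ LinearMap.range (ψ K)) :
    x * y ∈ LinearMap.range (ψ K) := by
  obtain ⟨u, rfl⟩ := hx
  obtain ⟨v, rfl⟩ := hy
  induction u using Finsupp.induction_linear with
  | zero => simp
  | add f g hf hg => rw [map_add, add_mul]; exact add_mem hf hg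
  | single w c =>
      induction v using Finsupp.induction_linear with
      | zero => simp
      | add f g hf hg => rw [map_add, mul_add]; exact add_mem hf hg
      | single v d =>
          rw [ψ_single, ψ_single, smul_mul_assoc, mul_smul_comm]
          apply Submodule.smul_mem _ _ (Submodule.smul_mem _ _ _)
          have : wprod K w.1 * wprod K v.1 = wprod K (w.1 ++ v.1) := by
            simp [wprod, List.map_append, List.prod_append]
          rw [this]
          exact wprod_mem_range K _

lemma ψ_surjective : Function.Surjective (ψ K) := by
  intro x
  have : x ∈ LinearMap.range (ψ K) := by
    obtain ⟨y, rfl⟩ := RingQuot.mkAlgHom_surjective K (MonomialRel K) x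
    induction y using FreeAlgebra.induction with
    | grade0 r =>
        refine ⟨Finsupp.single (⟨[], List.isChain_nil⟩ : W) r, ?_⟩
        rw [ψ_single]
        simp [wprod, Algebra.smul_def]
    | grade1 i =>
        refine ⟨Finsupp.single (⟨[i], List.isChain_singleton i⟩ : W) 1, ?_⟩
        rw [ψ_single]
        simp [wprod, Xgen]
    | mul a b ha hb => rw [map_mul]; exact mul_mem_range K _ _ ha hb
    | add a b ha hb => rw [map_add]; exact add_mem ha hb
  exact this

lemma ψ_θ (x : R K) : ψ K (θ K x) = x := by
  obtain ⟨v, rfl⟩ := ψ_surjective K x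
  rw [θ_ψ]

lemma θ_injective : Function.Injective (θ K) := by
  intro x y h
  have := congrArg (ψ K) h
  rwa [ψ_θ, ψ_θ] at this

def shiftW (n : ℕ) (w : W) : W :=
  ⟨w.1.map (· + n), by
    rw [List.isChain_map]
    exact w.2.imp (fun a b h => by omega)⟩

lemma split_unique {n : ℕ} : ∀ {w : List ℕ}, ∀ {w' v v' : List ℕ},
    (∀ x ∈ w, x < n) → (∀ x ∈ v, n ≤ x) → (∀ x ∈ w', x < n) → (∀ x ∈ v', n ≤ x) →
    w ++ v = w' ++ v' → w = w' ∧ v = v'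
  | [], [], v, v', _, _, _, _, h => ⟨rfl, h⟩
  | [], (b :: t'), v, v', _, hv, hw', _, h => by
      exfalso
      have hb : b ∈ v := by rw [List.nil_append] at h; rw [h]; simp
      have := hv b hb
      have := hw' b (by simp)
      omega
  | (a :: t), [], v, v', hw, _, _, hv', h => by
      exfalso
      have ha : a ∈ v' := by rw [List.nil_append] at h; rw [← h]; simp
      have := hv' a ha
      have := hw a (by simp)
      omega
  | (a :: t), (b :: t'), v, v', hw, hv, hw', hv', h => by
      rw [List.cons_append, List.cons_append, List.cons.injEq] at h
      obtain ⟨rfl, h2⟩ := h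
      obtain ⟨h3, h4⟩ := split_unique (fun x hx => hw x (by simp [hx]))
        hv (fun x hx => hw' x (by simp [hx])) hv' h2
      exact ⟨by rw [h3], h4⟩

lemma Phi_psi_apply (A B : V K) :
    Φ K (ψ K A) B = A.sum fun w c => c • ((Φ K (wprod K w.1)) B) := by
  induction A using Finsupp.induction_linear with
  | zero => simp
  | add f g hf hg =>
      rw [map_add, map_add, LinearMap.add_apply, hf, hg,
        Finsupp.sum_add_index' (by simp) (by intro a b1 b2; rw [add_smul])]
  | single w c =>
      rw [ψ_single, map_smul, LinearMap.smul_apply,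
        Finsupp.sum_single_index (by simp)]

lemma Phi_wprod_apply (w : W) (B : V K) :
    (Φ K (wprod K w.1)) B = B.sum fun v d => d • ((Φ K (wprod K w.1)) (Finsupp.single v 1)) := by
  conv_lhs => rw [← Finsupp.sum_single B]
  rw [map_finsuppSum]
  congr 1
  ext v d
  rw [← Finsupp.smul_single_one v d, map_smul]

lemma key (n : ℕ) (A B : V K)
    (hA : ∀ w ∈ A.support, ∀ x ∈ w.1, x < n)
    (hB : ∀ v ∈ B.support, ∀ x ∈ v.1, n ≤ x)
    (hA0 : A ≠ 0) (h : Φ K (ψ K A) B = 0) : B = 0 := by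
  obtain ⟨w0, hw0⟩ := Finsupp.support_nonempty_iff.mpr hA0
  ext v0
  by_cases hv0 : v0 ∈ B.support
  swap
  · simpa using Finsupp.notMem_support_iff.mp hv0
  -- the concatenation w0 ++ v0 is a chain
  have hchain : ∀ w ∈ A.support, ∀ v ∈ B.support, (w.1 ++ v.1).IsChain (· < ·) := by
    intro w hw v hv
    rw [List.isChain_append]
    refine ⟨w.2, v.2, fun x hx y hy => ?_⟩
    have hx' := hA w hw x (List.mem_of_mem_getLast? hx)
    have hy' := hB v hv y (List.mem_of_mem_head? hy)
    omega
  set u0 : W := ⟨w0.1 ++ v0.1, hchain w0 hw0 v0 hv0⟩ with hu0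
  have hval : ∀ w ∈ A.support, ∀ v ∈ B.support,
      ((Φ K (wprod K w.1)) (Finsupp.single v 1)) u0
        = if w = w0 ∧ v = v0 then (1:K) else 0 := by
    intro w hw v hv
    rw [Phi_wprod_single, dif_pos (hchain w hw v hv)]
    rw [Finsupp.single_apply]
    congr 1
    simp only [eq_iff_iff]
    constructor
    · intro he
      have : w.1 ++ v.1 = w0.1 ++ v0.1 := congrArg Subtype.val he
      obtain ⟨h1, h2⟩ := split_unique (hA w hw) (hB v hv) (hA w0 hw0) (hB v0 hv0) this
      exact ⟨Subtype.ext h1, Subtype.ext h2⟩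
    · rintro ⟨rfl, rfl⟩; rfl
  have h0 := congrArg (fun f : V K => f u0) h
  rw [Phi_psi_apply] at h0
  simp only [Finsupp.sum_apply, Finsupp.smul_apply, smul_eq_mul] at h0
  have hsum : ∀ w ∈ A.support,
      (B.sum fun v d => d • ((Φ K (wprod K w.1)) (Finsupp.single v 1))) u0
        = if w = w0 then B v0 else 0 := by
    intro w hw
    rw [Finsupp.sum_apply]
    rw [Finsupp.sum, Finset.sum_eq_single v0]
    · by_cases hwe : w = w0
      · rw [if_pos hwe, Finsupp.smul_apply, hval w hw v0 hv0, if_pos ⟨hwe, rfl⟩,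
          smul_eq_mul, mul_one]
      · rw [if_neg hwe, Finsupp.smul_apply, hval w hw v0 hv0,
          if_neg (fun hc => hwe hc.1), smul_zero]
    · intro v hv hne
      rw [Finsupp.smul_apply, hval w hw v hv, if_neg (fun hc => hne hc.2), smul_zero]
    · intro hv
      exact absurd hv0 (fun _ => hv hv0)
  have h1 : (A.sum fun w c => c * ((B.sum fun v d => d • ((Φ K (wprod K w.1)) (Finsupp.single v 1))) u0)) = A w0 * B v0 := by
    rw [Finsupp.sum, Finset.sum_eq_single w0]
    · rw [hsum w0 hw0, if_pos rfl]
    · intro w hw hne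
      rw [hsum w hw, if_neg hne, mul_zero]
    · intro hw; exact absurd hw0 hw
  rw [show (0 : V K) u0 = 0 from rfl] at h0
  have h2 : A w0 * B v0 = 0 := by
    rw [← h1, ← h0]
    apply Finsupp.sum_congr
    intro w hw
    rw [Phi_wprod_apply]
  have hA0' : A w0 ≠ 0 := Finsupp.mem_support_iff.mp hw0
  have := mul_eq_zero.mp h2
  simpa [hA0'] using this

lemma exists_beta (α : R K →ₐ[K] R K) (hα : ∀ k : ℕ, α (Xgen K k) = Xgen K (k + 1)) (n : ℕ) :
    ∃ β : R K →ₐ[K] R K, ⇑β = (⇑α)^[n] ∧ ∀ k : ℕ, β (Xgen K k) = Xgen K (k + n) := by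
  induction n with
  | zero => exact ⟨AlgHom.id K _, by simp, fun k => by simp⟩
  | succ n ih =>
      obtain ⟨β, hβ1, hβ2⟩ := ih
      refine ⟨α.comp β, ?_, fun k => ?_⟩
      · rw [Function.iterate_succ']
        funext x
        simp [hβ1]
      · rw [AlgHom.comp_apply, hβ2, hα]
        congr 1

lemma beta_wprod (n : ℕ) (β : R K →ₐ[K] R K) (hβ : ∀ k : ℕ, β (Xgen K k) = Xgen K (k + n))
    (l : List ℕ) : β (wprod K l) = wprod K (l.map (· + n)) := by
  rw [wprod, map_list_prod, wprod, List.map_map, List.map_map]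
  congr 1
  apply List.map_congr_left
  intro i _
  exact hβ i

lemma beta_psi (n : ℕ) (β : R K →ₐ[K] R K) (hβ : ∀ k : ℕ, β (Xgen K k) = Xgen K (k + n))
    (v : V K) : β (ψ K v) = ψ K (Finsupp.mapDomain (shiftW n) v) := by
  induction v using Finsupp.induction_linear with
  | zero => simp
  | add f g hf hg => rw [map_add, map_add, Finsupp.mapDomain_add, map_add, hf, hg]
  | single w c =>
      rw [ψ_single, map_smul, beta_wprod K n β hβ, Finsupp.mapDomain_single, ψ_single]
      rfl

lemma le_foldr_max : ∀ {l : List ℕ} {x : ℕ}, x ∈ l → x ≤ l.foldr max 0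
  | a :: t, x, h => by
      rcases List.mem_cons.mp h with rfl | h
      · exact le_max_left _ _
      · exact le_trans (le_foldr_max h) (le_max_right _ _)

end Stmt9


/-- For every nonzero `a : R` there is `n ≥ 0` such that the right annihilator of `a`
meets `α^n(R)` trivially. -/
theorem stmt9 (K : Type*) [Field K]
    (α : RingQuot (MonomialRel K) →ₐ[K] RingQuot (MonomialRel K))
    (hα : ∀ k : ℕ, α (Xgen K k) = Xgen K (k + 1))
    (a : RingQuot (MonomialRel K)) (ha : a ≠ 0) :
    ∃ n : ℕ, ∀ r : RingQuot (MonomialRel K), a * (⇑α)^[n] r = 0 → (⇑α)^[n] r = 0 := by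
  classical
  set A := Stmt9.θ K a with hAdef
  have hAne : A ≠ 0 := by
    intro h
    apply ha
    rw [← Stmt9.ψ_θ K a, ← hAdef, h, map_zero]
  set n := A.support.sup (fun w => w.1.foldr max 0) + 1 with hndef
  have hAsupp : ∀ w ∈ A.support, ∀ x ∈ w.1, x < n := by
    intro w hw x hx
    have h1 : x ≤ w.1.foldr max 0 := Stmt9.le_foldr_max hx
    have h2 : w.1.foldr max 0 ≤ A.support.sup (fun w : Stmt9.W => w.1.foldr max 0) :=
      Finset.le_sup (f := fun w : Stmt9.W => w.1.foldr max 0) hw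
    omega
  refine ⟨n, fun r hr => ?_⟩
  obtain ⟨β, hβ1, hβ2⟩ := Stmt9.exists_beta K α hα n
  rw [← hβ1] at hr ⊢
  set B := Finsupp.mapDomain (Stmt9.shiftW n) (Stmt9.θ K r) with hBdef
  have hβr : β r = Stmt9.ψ K B := by
    rw [hBdef, ← Stmt9.beta_psi K n β hβ2, Stmt9.ψ_θ]
  have hBsupp : ∀ v ∈ B.support, ∀ x ∈ v.1, n ≤ x := by
    intro v hv x hx
    have := Finsupp.mapDomain_support hv
    obtain ⟨w, _, rfl⟩ := Finset.mem_image.mp this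
    obtain ⟨y, _, rfl⟩ := List.mem_map.mp hx
    omega
  have hθB : Stmt9.θ K (β r) = B := by rw [hβr, Stmt9.θ_ψ]
  have hkey : Stmt9.Φ K (Stmt9.ψ K A) B = 0 := by
    have : Stmt9.ψ K A = a := Stmt9.ψ_θ K a
    rw [this, ← hθB, Stmt9.θ_apply, ← LinearMap.comp_apply, ← Module.End.mul_eq_comp,
      ← map_mul, hr, map_zero]
    rfl
  have hB0 := Stmt9.key K n A B hAsupp hBsupp hAne hkey
  rw [hβr, hB0, map_zero]
end

section
/- Let K be a field and let R be the quotient of the free noncommutative K-algebra on generators x_0, x_1, x_2, … by the two-sided ideal generated by all products x_k·x_ℓ with k ≥ ℓ. Then the K-algebra endomorphism α of R induced by x_k ↦ x_{k+1} is injective. -/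
lemma Xgen_mul_zero (K : Type*) [Field K] (k ℓ : ℕ) (h : ℓ ≤ k) :
    Xgen K k * Xgen K ℓ = 0 := by
  have := RingQuot.mkAlgHom_rel K (s := MonomialRel K) (MonomialRel.rel k ℓ h)
  simpa [Xgen, map_mul] using this

/-- The "unshift" map sending `x_0 ↦ 0` and `x_{k+1} ↦ x_k`. -/
noncomputable def unshiftFree (K : Type*) [Field K] :
    FreeAlgebra K ℕ →ₐ[K] RingQuot (MonomialRel K) :=
  FreeAlgebra.lift K (fun n => match n with | 0 => 0 | k+1 => Xgen K k)

lemma unshiftFree_rel (K : Type*) [Field K] ⦃x y : FreeAlgebra K ℕ⦄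
    (h : MonomialRel K x y) : unshiftFree K x = unshiftFree K y := by
  cases h with
  | rel k ℓ h =>
    simp only [map_mul, map_zero, unshiftFree, FreeAlgebra.lift_ι_apply]
    match k, ℓ, h with
    | k, 0, _ => simp
    | k+1, ℓ+1, h => exact Xgen_mul_zero K k ℓ (Nat.le_of_succ_le_succ h)

noncomputable def unshift (K : Type*) [Field K] :
    RingQuot (MonomialRel K) →ₐ[K] RingQuot (MonomialRel K) :=
  RingQuot.liftAlgHom K ⟨unshiftFree K, unshiftFree_rel K⟩

lemma unshift_Xgen (K : Type*) [Field K] (k : ℕ) :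
    unshift K (Xgen K (k + 1)) = Xgen K k := by
  simp [unshift, Xgen, RingQuot.liftAlgHom_mkAlgHom_apply, unshiftFree,
    FreeAlgebra.lift_ι_apply]

/-- The `K`-algebra endomorphism of `R` induced by `x_k ↦ x_{k+1}` is injective. -/
theorem stmt10 (K : Type*) [Field K]
    (α : RingQuot (MonomialRel K) →ₐ[K] RingQuot (MonomialRel K))
    (hα : ∀ k : ℕ, α (Xgen K k) = Xgen K (k + 1)) :
    Function.Injective α := by
  have hcomp : (unshift K).comp α = AlgHom.id K _ := by
    apply RingQuot.ringQuot_ext'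
    apply FreeAlgebra.hom_ext
    funext k
    show unshift K (α (Xgen K k)) = Xgen K k
    rw [hα, unshift_Xgen]
  intro a b hab
  have h2 := congrArg (unshift K) hab
  rwa [show unshift K (α a) = a from AlgHom.congr_fun hcomp a,
    show unshift K (α b) = b from AlgHom.congr_fun hcomp b] at h2
end

section
/- Let K be a field, let R be the quotient of the free noncommutative K-algebra on generators x_0, x_1, x_2, … by the two-sided ideal generated by all products x_k·x_ℓ with k ≥ ℓ, and let α be the K-algebra endomorphism of R induced by x_k ↦ x_{k+1}. Then for every nonzero a ∈ R and every m ≥ 0 there exist k ≥ 0, a finite subset F of the additive subgroup a·α^m(R) + α(a)·α^{m+1}(R) + … + α^k(a)·α^{m+k}(R), and n ≥ 0 such that the right annihilator of F meets α^n(R) trivially: for every r ∈ R, if b·α^n(r) = 0 for all b ∈ F, then α^n(r) = 0. -/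
namespace Stmt11aux

variable (K : Type*) [Field K]

abbrev V := List ℕ →₀ K

/-- `okB p v` : last of `p` is less than head of `v` (trivially true if either is missing). -/
def okB (p v : List ℕ) : Bool :=
  match p.getLast?, v.head? with
  | some x, some y => decide (x < y)
  | _, _ => true

lemma okB_nil_left (v : List ℕ) : okB [] v = true := by
  cases v <;> rfl

lemma okB_nil_right (p : List ℕ) : okB p [] = true := by
  unfold okB; cases p.getLast? <;> rfl

lemma okB_append_left {p u : List ℕ} (hu : u ≠ []) (v : List ℕ) :
    okB (p ++ u) v = okB u v := by
  unfold okB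
  rw [List.getLast?_append_of_ne_nil p hu]

lemma okB_append_right {u v : List ℕ} (hu : u ≠ []) (p : List ℕ) :
    okB p (u ++ v) = okB p u := by
  unfold okB
  rw [List.head?_append_of_ne_nil u hu]

noncomputable def starL (v : List ℕ) : V K →ₗ[K] V K :=
  Finsupp.lsum K (fun p => if okB p v then Finsupp.lsingle (p ++ v) else 0)

lemma starL_single (v p : List ℕ) (c : K) :
    starL K v (Finsupp.single p c)
      = if okB p v then Finsupp.single (p ++ v) c else 0 := by
  rw [starL, Finsupp.lsum_single]
  split <;> simp [Finsupp.lsingle]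

noncomputable def yk (k : ℕ) : Module.End K (V K) :=
  Finsupp.lsum K (fun v => if okB [k] v then Finsupp.lsingle (k :: v) else 0)

lemma yk_single (k : ℕ) (v : List ℕ) (c : K) :
    yk K k (Finsupp.single v c)
      = if okB [k] v then Finsupp.single (k :: v) c else 0 := by
  rw [yk, Finsupp.lsum_single]
  split <;> simp [Finsupp.lsingle]

lemma yk_mul_yk {k ℓ : ℕ} (h : ℓ ≤ k) : yk K k * yk K ℓ = 0 := by
  apply Finsupp.lhom_ext (fun v c => ?_)
  show yk K k (yk K ℓ (Finsupp.single v c)) = 0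
  rw [yk_single]
  split
  · rw [yk_single]
    have : okB [k] (ℓ :: v) = false := by
      unfold okB; simp; omega
    simp [this]
  · simp

noncomputable def Φ : RingQuot (MonomialRel K) →ₐ[K] Module.End K (V K) :=
  RingQuot.liftAlgHom K ⟨FreeAlgebra.lift K (yk K), by
    rintro x y ⟨k, ℓ, h⟩
    simp [map_mul, yk_mul_yk K h]⟩

lemma Φ_Xgen (k : ℕ) : Φ K (Xgen K k) = yk K k := by
  rw [Xgen, Φ, RingQuot.liftAlgHom_mkAlgHom_apply]
  simp

/-- induction principle for the quotient ring -/
lemma R_induction {P : RingQuot (MonomialRel K) → Prop}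
    (halg : ∀ c : K, P (algebraMap K _ c))
    (hgen : ∀ k : ℕ, P (Xgen K k))
    (hadd : ∀ b c, P b → P c → P (b + c))
    (hmul : ∀ b c, P b → P c → P (b * c)) :
    ∀ b, P b := by
  intro b
  obtain ⟨c, rfl⟩ := RingQuot.mkAlgHom_surjective K (MonomialRel K) b
  induction c using FreeAlgebra.induction with
  | grade0 c => rw [AlgHom.commutes]; exact halg c
  | grade1 i => exact hgen i
  | mul x y hx hy => rw [map_mul]; exact hmul _ _ hx hy
  | add x y hx hy => rw [map_add]; exact hadd _ _ hx hy

lemma Xgen_mul {k ℓ : ℕ} (h : ℓ ≤ k) : Xgen K k * Xgen K ℓ = 0 := by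
  have := RingQuot.mkAlgHom_rel K (MonomialRel.rel (K := K) k ℓ h)
  rw [map_mul, map_zero] at this
  exact this

noncomputable def XL (v : List ℕ) : RingQuot (MonomialRel K) := (v.map (Xgen K)).prod

noncomputable def Ψ : V K →ₗ[K] RingQuot (MonomialRel K) :=
  Finsupp.lsum K (fun v => LinearMap.toSpanSingleton K _ (XL K v))

lemma Ψ_single (v : List ℕ) (c : K) : Ψ K (Finsupp.single v c) = c • XL K v := by
  rw [Ψ, Finsupp.lsum_single]; rfl

lemma Ψ_Φ (b : RingQuot (MonomialRel K)) : ∀ f : V K, Ψ K (Φ K b f) = b * Ψ K f := by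
  induction b using R_induction with
  | halg c =>
      intro f
      rw [AlgHom.commutes]
      show Ψ K ((c • (1 : Module.End K (V K))) f) = _
      rw [Algebra.algebraMap_eq_smul_one]
      simp [smul_mul_assoc]
  | hgen k =>
      intro f
      rw [Φ_Xgen]
      induction f using Finsupp.induction with
      | zero => simp
      | single_add v c f _ _ ih =>
          rw [map_add, map_add, map_add, mul_add, ih]
          congr 1
          rw [yk_single, Ψ_single]
          split
          · rw [Ψ_single]
            simp [XL, mul_smul_comm]
          · rename_i hok
            have hv : v ≠ [] := by
              rintro rfl
              rw [okB_nil_right] at hok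
              exact hok rfl
            obtain ⟨j, t, rfl⟩ := List.exists_cons_of_ne_nil hv
            have hjk : j ≤ k := by
              unfold okB at hok
              simp at hok
              omega
            simp [XL, ← mul_assoc, Xgen_mul K hjk, mul_smul_comm]
  | hadd b c hb hc => intro f; simp [map_add, add_mul, hb f, hc f]
  | hmul b c hb hc =>
      intro f
      rw [map_mul]
      show Ψ K (Φ K b (Φ K c f)) = _
      rw [hb, hc, mul_assoc]

noncomputable def δ : V K := Finsupp.single [] 1

lemma Ψ_Φ_δ (b : RingQuot (MonomialRel K)) : Ψ K (Φ K b (δ K)) = b := by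
  rw [Ψ_Φ, δ, Ψ_single]
  simp [XL]

lemma starComp (u v : List ℕ) (f : V K) :
    starL K v (starL K u f) = if okB u v then starL K (u ++ v) f else 0 := by
  induction f using Finsupp.induction with
  | zero => simp
  | single_add p c f _ _ ih =>
      rw [map_add, map_add, ih]
      cases hu : okB u v with
      | false =>
          simp only [Bool.false_eq_true, if_false, add_zero]
          rw [starL_single]
          have hune : u ≠ [] := by
            rintro rfl
            rw [okB_nil_left] at hu
            exact absurd hu (by simp)
          split
          · rw [starL_single, okB_append_left hune, hu]
            simp
          · simp
      | true =>
          simp only [if_true, map_add]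
          congr 1
          rw [starL_single, starL_single]
          by_cases hune : u = []
          · subst hune
            simp [okB_nil_right, starL_single]
          · rw [okB_append_right hune]
            split
            · rw [starL_single, okB_append_left hune, hu, if_pos rfl, List.append_assoc]
            · simp

lemma apply_eq_sum (T : V K →ₗ[K] V K) (f : V K) :
    T f = f.sum fun u d => d • T (Finsupp.single u 1) := by
  conv_lhs => rw [← Finsupp.sum_single f, map_finsuppSum]
  apply Finsupp.sum_congr
  intro u _
  rw [← map_smul, Finsupp.smul_single', mul_one]

/-- the key structure lemma: `Φ b (single v 1) = starL v (Φ b δ)`. -/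
lemma Q (b : RingQuot (MonomialRel K)) :
    ∀ v : List ℕ, Φ K b (Finsupp.single v 1) = starL K v (Φ K b (δ K)) := by
  induction b using R_induction with
  | halg c =>
      intro v
      rw [AlgHom.commutes, Module.algebraMap_end_apply, Module.algebraMap_end_apply, map_smul,
        δ, starL_single, okB_nil_left, if_pos rfl, List.nil_append]
  | hgen k =>
      intro v
      rw [Φ_Xgen, yk_single, δ, yk_single, okB_nil_right, if_pos rfl, starL_single]
      rfl
  | hadd b c hb hc =>
      intro v
      rw [map_add, LinearMap.add_apply, LinearMap.add_apply, hb v, hc v, map_add]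
  | hmul b c hb hc =>
      intro v
      have key : ∀ f : V K, Φ K b (starL K v f) = starL K v (Φ K b f) := by
        intro f
        induction f using Finsupp.induction with
        | zero => simp
        | single_add u d f _ _ ih =>
            rw [map_add, map_add, map_add, map_add, ih]
            congr 1
            have h1 : Φ K b (Finsupp.single u d) = d • starL K u (Φ K b (δ K)) := by
              rw [← Finsupp.smul_single_one, map_smul, hb u]
            rw [starL_single, h1, map_smul, starComp]
            split
            · rw [← Finsupp.smul_single_one, map_smul, hb (u ++ v)]
            · simp
      rw [map_mul, Module.End.mul_apply, Module.End.mul_apply, hc v, key]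

noncomputable def shiftL : V K →ₗ[K] V K :=
  Finsupp.lsum K (fun v => Finsupp.lsingle (v.map Nat.succ))

lemma shiftL_single (v : List ℕ) (c : K) :
    shiftL K (Finsupp.single v c) = Finsupp.single (v.map Nat.succ) c := by
  rw [shiftL, Finsupp.lsum_single]; rfl

lemma okB_shift (k : ℕ) (v : List ℕ) :
    okB [k + 1] (v.map Nat.succ) = okB [k] v := by
  cases v with
  | nil => rfl
  | cons j t =>
      unfold okB
      simp

lemma Φ_shift (α : RingQuot (MonomialRel K) →ₐ[K] RingQuot (MonomialRel K))
    (hα : ∀ k : ℕ, α (Xgen K k) = Xgen K (k + 1))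
    (b : RingQuot (MonomialRel K)) :
    ∀ f : V K, Φ K (α b) (shiftL K f) = shiftL K (Φ K b f) := by
  induction b using R_induction with
  | halg c =>
      intro f
      rw [AlgHom.commutes, AlgHom.commutes, Module.algebraMap_end_apply,
        Module.algebraMap_end_apply, map_smul]
  | hgen k =>
      intro f
      rw [hα k, Φ_Xgen, Φ_Xgen]
      induction f using Finsupp.induction with
      | zero => simp
      | single_add v c f _ _ ih =>
          rw [map_add, map_add, map_add, map_add, ih]
          congr 1
          rw [shiftL_single, yk_single, yk_single, okB_shift]
          split
          · rw [shiftL_single]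
            rfl
          · simp
  | hadd b c hb hc =>
      intro f
      simp [map_add, hb f, hc f]
  | hmul b c hb hc =>
      intro f
      simp [map_mul, Module.End.mul_apply, hb, hc]

lemma shiftL_δ : shiftL K (δ K) = δ K := by
  rw [δ, shiftL_single]; rfl

lemma Φ_iterate (α : RingQuot (MonomialRel K) →ₐ[K] RingQuot (MonomialRel K))
    (hα : ∀ k : ℕ, α (Xgen K k) = Xgen K (k + 1))
    (n : ℕ) (r : RingQuot (MonomialRel K)) :
    Φ K ((⇑α)^[n] r) (δ K) = (⇑(shiftL K))^[n] (Φ K r (δ K)) := by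
  induction n with
  | zero => rfl
  | succ n ih =>
      rw [Function.iterate_succ_apply', Function.iterate_succ_apply', ← ih]
      conv_lhs => rw [← shiftL_δ]
      rw [Φ_shift K α hα]

lemma shiftL_eq_mapDomain (f : V K) :
    shiftL K f = Finsupp.mapDomain (List.map Nat.succ) f := by
  induction f using Finsupp.induction with
  | zero => simp
  | single_add v c f _ _ ih => rw [map_add, ih, shiftL_single, Finsupp.mapDomain_add,
      Finsupp.mapDomain_single]

lemma shiftL_iterate_support (n : ℕ) (f : V K) :
    ∀ p ∈ ((⇑(shiftL K))^[n] f).support, ∀ e ∈ p, n ≤ e := by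
  induction n generalizing f with
  | zero => intro p _ e _; exact Nat.zero_le e
  | succ n ih =>
      intro p hp e he
      rw [Function.iterate_succ_apply'] at hp
      rw [shiftL_eq_mapDomain] at hp
      have := Finsupp.mapDomain_support hp
      rw [Finset.mem_image] at this
      obtain ⟨q, hq, rfl⟩ := this
      rw [List.mem_map] at he
      obtain ⟨e', he', rfl⟩ := he
      exact Nat.succ_le_succ (ih f q hq e' he')

lemma le_foldr_max {e : ℕ} {p : List ℕ} (he : e ∈ p) : e ≤ p.foldr max 0 := by
  induction p with
  | nil => simp at he
  | cons x t ih =>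
      rcases List.mem_cons.mp he with rfl | h
      · exact le_max_left _ _
      · exact le_trans (ih h) (le_max_right _ _)

lemma okB_of_bounds {N : ℕ} {p u : List ℕ} (hp : ∀ e ∈ p, e < N) (hu : ∀ e ∈ u, N ≤ e) :
    okB p u = true := by
  unfold okB
  cases hl : p.getLast? with
  | none => rfl
  | some x =>
      cases hh : u.head? with
      | none => rfl
      | some y =>
          have hx := hp x (List.mem_of_getLast? hl)
          have hy := hu y (List.mem_of_mem_head? hh)
          simp only [decide_eq_true_eq]
          omega

lemma append_inj_of_bounds {N : ℕ} : ∀ {p p₀ u u₀ : List ℕ},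
    (∀ e ∈ p, e < N) → (∀ e ∈ p₀, e < N) → (∀ e ∈ u, N ≤ e) → (∀ e ∈ u₀, N ≤ e) →
    p ++ u = p₀ ++ u₀ → p = p₀ ∧ u = u₀ := by
  intro p
  induction p with
  | nil =>
      intro p₀ u u₀ _ hp₀ hu hu₀ h
      cases p₀ with
      | nil => exact ⟨rfl, by simpa using h⟩
      | cons e t =>
          exfalso
          rw [List.nil_append] at h
          have he : e ∈ u := by rw [h]; exact List.mem_cons_self
          have := hu e he
          have := hp₀ e (List.mem_cons_self)
          omega
  | cons e p ih =>
      intro p₀ u u₀ hp hp₀ hu hu₀ h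
      cases p₀ with
      | nil =>
          exfalso
          rw [List.nil_append] at h
          have he : e ∈ u₀ := by rw [← h]; exact List.mem_cons_self
          have := hu₀ e he
          have := hp e (List.mem_cons_self)
          omega
      | cons e' t =>
          rw [List.cons_append, List.cons_append, List.cons.injEq] at h
          obtain ⟨rfl, h2⟩ := h
          obtain ⟨h3, h4⟩ := ih (fun x hx => hp x (List.mem_cons_of_mem _ hx))
            (fun x hx => hp₀ x (List.mem_cons_of_mem _ hx)) hu hu₀ h2
          exact ⟨by rw [h3], h4⟩

lemma starL_apply' (u : List ℕ) (f : V K) :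
    starL K u f = f.sum fun p c => if okB p u then Finsupp.single (p ++ u) c else 0 := by
  rw [starL, Finsupp.lsum_apply]
  apply Finsupp.sum_congr
  intro p _
  split <;> simp [Finsupp.lsingle]

lemma key_final (a : RingQuot (MonomialRel K)) (ha : a ≠ 0) :
    ∃ N : ℕ, ∀ s : RingQuot (MonomialRel K),
      (∀ p ∈ (Φ K s (δ K)).support, ∀ e ∈ p, N ≤ e) → a * s = 0 → s = 0 := by
  set A := Φ K a (δ K) with hAdef
  have hA0 : A ≠ 0 := fun h => ha (by rw [← Ψ_Φ_δ K a, ← hAdef, h, map_zero])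
  set N : ℕ := (A.support.sup fun p => p.foldr max 0) + 1 with hNdef
  have hbnd : ∀ p ∈ A.support, ∀ e ∈ p, e < N := by
    intro p hp e he
    have h1 : e ≤ p.foldr max 0 := le_foldr_max he
    have h2 : p.foldr max 0 ≤ A.support.sup fun p => p.foldr max 0 :=
      Finset.le_sup hp
    omega
  refine ⟨N, fun s hs hmul => ?_⟩
  set B := Φ K s (δ K) with hBdef
  have hΦB : Φ K a B = 0 := by
    rw [hBdef, ← Module.End.mul_apply, ← map_mul, hmul, map_zero, LinearMap.zero_apply]
  have hB0 : B = 0 := by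
    ext u₀
    rw [Finsupp.zero_apply]
    by_contra h0
    have hu₀ : u₀ ∈ B.support := Finsupp.mem_support_iff.mpr h0
    obtain ⟨p₀, hp₀⟩ := Finsupp.support_nonempty_iff.mpr hA0
    have hexp : Φ K a B = B.sum fun u d => d • starL K u A := by
      rw [apply_eq_sum K (Φ K a) B]
      apply Finsupp.sum_congr
      intro u _
      rw [Q K a u]
    have hval : (Φ K a B) (p₀ ++ u₀) = 0 := by rw [hΦB]; rfl
    rw [hexp, Finsupp.sum_apply, Finsupp.sum] at hval
    have hterm : ∀ u ∈ B.support,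
        (B u • starL K u A) (p₀ ++ u₀) = if u = u₀ then B u * A p₀ else 0 := by
      intro u hu
      have hubnd : ∀ e ∈ u, N ≤ e := hs u hu
      rw [Finsupp.smul_apply, starL_apply', Finsupp.sum_apply, Finsupp.sum]
      have hterm2 : ∀ p ∈ A.support,
          (if okB p u then Finsupp.single (p ++ u) (A p) else 0) (p₀ ++ u₀)
            = if u = u₀ ∧ p = p₀ then A p else 0 := by
        intro p hp
        rw [if_pos (okB_of_bounds (hbnd p hp) hubnd), Finsupp.single_apply]
        by_cases heq : p ++ u = p₀ ++ u₀
        · obtain ⟨rfl, rfl⟩ := append_inj_of_bounds (hbnd p hp) (hbnd p₀ hp₀)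
            hubnd (hs u₀ hu₀) heq
          simp
        · rw [if_neg heq, if_neg]
          rintro ⟨rfl, rfl⟩
          exact heq rfl
      rw [Finset.sum_congr rfl hterm2]
      by_cases hu' : u = u₀
      · subst hu'
        simp only [true_and]
        rw [Finset.sum_ite_eq' A.support p₀ (fun p => A p), if_pos hp₀]
        simp [smul_eq_mul]
      · simp [hu']
    rw [Finset.sum_congr rfl hterm, Finset.sum_ite_eq' B.support u₀, if_pos hu₀] at hval
    exact absurd hval (mul_ne_zero h0 (Finsupp.mem_support_iff.mp hp₀))
  have : s = Ψ K (Φ K s (δ K)) := (Ψ_Φ_δ K s).symm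
  rw [this, ← hBdef, hB0, map_zero]

end Stmt11aux

/-- For every nonzero `a : R` and every `m ≥ 0` there are `k ≥ 0`, a finite subset `F` of
`a·α^m(R) + α(a)·α^{m+1}(R) + ⋯ + α^k(a)·α^{m+k}(R)`, and `n ≥ 0` such that the right
annihilator of `F` meets `α^n(R)` trivially. -/
theorem stmt11 (K : Type*) [Field K]
    (α : RingQuot (MonomialRel K) →ₐ[K] RingQuot (MonomialRel K))
    (hα : ∀ k : ℕ, α (Xgen K k) = Xgen K (k + 1))
    (a : RingQuot (MonomialRel K)) (ha : a ≠ 0) (m : ℕ) :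
    ∃ k : ℕ, ∃ F : Finset (RingQuot (MonomialRel K)), ∃ n : ℕ,
      (↑F : Set (RingQuot (MonomialRel K))) ⊆
        { x : RingQuot (MonomialRel K) | ∃ g : ℕ → RingQuot (MonomialRel K),
          x = ∑ i ∈ Finset.range (k + 1), (⇑α)^[i] a * (⇑α)^[m + i] (g i) } ∧
      ∀ r : RingQuot (MonomialRel K),
        (∀ b ∈ F, b * (⇑α)^[n] r = 0) → (⇑α)^[n] r = 0 := by
  obtain ⟨N, hN⟩ := Stmt11aux.key_final K a ha
  refine ⟨0, {a}, N, ?_, ?_⟩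
  · intro x hx
    simp only [Finset.coe_singleton, Set.mem_singleton_iff] at hx
    subst hx
    refine ⟨fun _ => 1, ?_⟩
    have h1 : (⇑α)^[m + 0] (1 : RingQuot (MonomialRel K)) = 1 := by
      induction (m + 0) with
      | zero => rfl
      | succ j ih => rw [Function.iterate_succ_apply', ih, map_one]
    simp [Finset.sum_range_one, h1]
  · intro r hr
    have hmul := hr a (Finset.mem_singleton_self a)
    apply hN ((⇑α)^[N] r) ?_ hmul
    intro p hp e he
    rw [Stmt11aux.Φ_iterate K α hα] at hp
    exact Stmt11aux.shiftL_iterate_support K N _ p hp e he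
end
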